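/- arXiv:1512.08041 — 5 statements merged into one kernel-verified Lean document; each statement's English description precedes it below -/
import Mathlib

section
/- Let M be an m×n Boolean matrix, U an m×k Boolean matrix, and V an n×k Boolean matrix such that M = U ∘ Vᵀ. Define the n×k Boolean matrix J = complement of (M̄ᵀ ∘ U). Then M = U ∘ Jᵀ. -/
/-!
Read `J` as the residual of `M` by `U`: `J j t` holds iff every row `s` with `U s t` has
`M s j`. The composite `U ∘ Jᵀ` always lies below `M`, and any factor `V` with
`M = U ∘ Vᵀ` lies below `J`, so `M = U ∘ Vᵀ ≤ U ∘ Jᵀ ≤ M`.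
-/

theorem iff_exists_and_residual_of_iff_exists_and {α β γ : Type*}
    {M : α → β → Prop} {U : α → γ → Prop} {V J : β → γ → Prop}
    (hM : ∀ a b, M a b ↔ ∃ c, U a c ∧ V b c) (hJ : ∀ b c, J b c ↔ ∀ a, U a c → M a b)
    (a : α) (b : β) : M a b ↔ ∃ c, U a c ∧ J b c := by
  refine ⟨fun hab => ?_, fun ⟨c, hac, hbc⟩ => (hJ b c).1 hbc a hac⟩
  obtain ⟨c, hac, hbc⟩ := (hM a b).1 hab
  exact ⟨c, hac, (hJ b c).2 fun a' ha'c => (hM a' b).2 ⟨c, ha'c, hbc⟩⟩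

/-- If M = U ∘ Vᵀ (where M is m×n, U is m×k, V is n×k) and
J = complement of (M̄ᵀ ∘ U) (an n×k Boolean matrix), then M = U ∘ Jᵀ.
Here (U∘Jᵀ)[i,j] = ⋁_t (U[i,t] ∧ J[j,t]) and
(M̄ᵀ ∘ U)[i,j] = ⋁_t (¬M[t,i] ∧ U[t,j]). -/
theorem stmt_6 (m n k : ℕ) (M : Matrix (Fin m) (Fin n) Bool)
    (U : Matrix (Fin m) (Fin k) Bool) (V : Matrix (Fin n) (Fin k) Bool)
    (hM : ∀ i j, M i j = decide (∃ t : Fin k, U i t = true ∧ V j t = true))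
    (J : Matrix (Fin n) (Fin k) Bool)
    (hJ : ∀ i j, J i j = !(decide (∃ t : Fin m, (!(M t i)) = true ∧ U t j = true))) :
    ∀ i j, M i j = decide (∃ t : Fin k, U i t = true ∧ J j t = true) := by
  intro i j
  rw [Bool.eq_iff_iff, decide_eq_true_iff]
  refine iff_exists_and_residual_of_iff_exists_and (M := fun i j => M i j = true)
    (U := fun i t => U i t = true) (V := fun j t => V j t = true) (J := fun j t => J j t = true)
    (fun i j => ?_) (fun j t => ?_) i j
  · rw [hM, decide_eq_true_iff]
  · rw [hJ]
    simp only [Bool.not_eq_true', decide_eq_false_iff_not, not_exists, not_and]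
    exact forall_congr' fun s => by rw [← Bool.not_eq_true, not_imp_not]
end

section
/- Let M be an arbitrary m×n Boolean matrix and define the n×n Boolean matrix J = complement of (M̄ᵀ ∘ M). Then for every n×n Boolean matrix V satisfying M = M ∘ Vᵀ, one has V ≤ J (entrywise). Moreover M = M ∘ Jᵀ itself holds. -/
/-! `J i j` holds exactly when column `j` of `M` is contained in column `i`. If `M = M ∘ Vᵀ`,
then `V i j` forces this containment, so `V ≤ J`; and since containment of columns is reflexive
and transitive, `M ∘ Jᵀ = M`. -/

section ColumnContainment

variable {ι κ : Type*} {M : Matrix ι κ Bool}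

theorem column_subset_of_eq_mul_transpose {V : Matrix κ κ Bool}
    (hV : ∀ i j, M i j = true ↔ ∃ t, M i t = true ∧ V j t = true) {i j : κ}
    (hij : V i j = true) (t : ι) (ht : M t j = true) : M t i = true :=
  (hV t i).2 ⟨j, ht, hij⟩

theorem eq_mul_transpose_of_column_subset {J : Matrix κ κ Bool}
    (hJ : ∀ i j, J i j = true ↔ ∀ t, M t j = true → M t i = true) (i : ι) (j : κ) :
    M i j = true ↔ ∃ t, M i t = true ∧ J j t = true :=
  ⟨fun hij => ⟨j, hij, (hJ j j).2 fun _ => id⟩, fun ⟨t, hit, hjt⟩ => (hJ j t).1 hjt i hit⟩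

end ColumnContainment

/-- For an arbitrary m×n Boolean matrix M and J = complement of (M̄ᵀ ∘ M),
every n×n Boolean matrix V with M = M ∘ Vᵀ satisfies V ≤ J, and moreover M = M ∘ Jᵀ.
Here (M∘Vᵀ)[i,j] = ⋁_t (M[i,t] ∧ V[j,t]) and (M̄ᵀ∘M)[i,j] = ⋁_t (¬M[t,i] ∧ M[t,j]). -/
theorem stmt_7 (m n : ℕ) (M : Matrix (Fin m) (Fin n) Bool)
    (J : Matrix (Fin n) (Fin n) Bool)
    (hJ : ∀ i j, J i j = !(decide (∃ t : Fin m, (!(M t i)) = true ∧ M t j = true))) :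
    (∀ V : Matrix (Fin n) (Fin n) Bool,
        (∀ i j, M i j = decide (∃ t : Fin n, M i t = true ∧ V j t = true)) →
        ∀ i j, V i j ≤ J i j) ∧
    (∀ i j, M i j = decide (∃ t : Fin n, M i t = true ∧ J j t = true)) := by
  have hcol : ∀ i j, J i j = true ↔ ∀ t, M t j = true → M t i = true := by
    intro i j
    simp only [hJ, Bool.not_eq_true', decide_eq_false_iff_not, not_exists, not_and]
    exact forall_congr' fun t => by cases M t i <;> cases M t j <;> simp
  refine ⟨fun V hV i j => Bool.le_iff_imp.2 fun hij => (hcol i j).2 ?_, fun i j => ?_⟩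
  · exact column_subset_of_eq_mul_transpose (fun i j => by simp [hV i j]) hij
  · rw [Bool.eq_iff_iff, decide_eq_true_eq]
    exact eq_mul_transpose_of_column_subset hcol i j
end

section
/- Let M be an m×n Boolean matrix and J = complement of (M̄ᵀ ∘ M). Then for all indices i, j ∈ {1,…,n}: J[i,j] = J[j,i] = 1 if and only if M[:,i] = M[:,j], and this holds if and only if J[:,i] = J[:,j] and J[i,:] = J[j,:]. -/
/-! `J[i,j] = 1` says exactly that the support of column `j` of `M` is contained in that of column `i`,
i.e. `M[:,j] ≤ M[:,i]` in the pointwise order on `Bool`-vectors. So `J` is the comparability matrix of the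
columns of `M` in a partial order, and both equivalences are the antisymmetry of that order: an element is
determined by the elements above it (or below it). -/

open Matrix

theorem Bool.not_decide_exists_not_and_eq_true_iff_le {ι : Type*} (a b : ι → Bool)
    [Decidable (∃ t, (!a t) = true ∧ b t = true)] :
    (!decide (∃ t, (!a t) = true ∧ b t = true)) = true ↔ b ≤ a := by
  simp only [Bool.not_eq_true', decide_eq_false_iff_not, not_exists, Pi.le_def,
    Bool.le_iff_imp]
  exact forall_congr' fun t => by cases a t <;> cases b t <;> simp

theorem apply_eq_apply_iff_forall_le_iff {κ α : Type*} [PartialOrder α] (f : κ → α) (i j : κ) :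
    f i = f j ↔ (∀ t, f i ≤ f t ↔ f j ≤ f t) ∧ (∀ t, f t ≤ f i ↔ f t ≤ f j) := by
  refine ⟨fun h => by simp [h], fun ⟨_, hle⟩ => le_antisymm ?_ ?_⟩
  · exact (hle i).mp le_rfl
  · exact (hle j).mpr le_rfl

/-- With J = complement of (M̄ᵀ ∘ M), for all i, j:
J[i,j] = J[j,i] = 1 iff M[:,i] = M[:,j], iff (J[:,i] = J[:,j] and J[i,:] = J[j,:]). -/
theorem stmt_9 (m n : ℕ) (M : Matrix (Fin m) (Fin n) Bool)
    (J : Matrix (Fin n) (Fin n) Bool)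
    (hJ : ∀ i j, J i j = !(decide (∃ t : Fin m, (!(M t i)) = true ∧ M t j = true))) :
    ∀ i j : Fin n,
      ((J i j = true ∧ J j i = true) ↔ (∀ t, M t i = M t j)) ∧
      ((∀ t, M t i = M t j) ↔ ((∀ t, J t i = J t j) ∧ (∀ t, J i t = J j t))) := by
  have hJle : ∀ i j, J i j = true ↔ Mᵀ j ≤ Mᵀ i := fun i j => by
    rw [hJ]
    exact Bool.not_decide_exists_not_and_eq_true_iff_le (Mᵀ i) (Mᵀ j)
  have hcol : ∀ i j, (∀ t, M t i = M t j) ↔ Mᵀ i = Mᵀ j := fun i j => funext_iff.symm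
  have hJeq : ∀ a b c d, J a b = J c d ↔ (Mᵀ b ≤ Mᵀ a ↔ Mᵀ d ≤ Mᵀ c) := fun a b c d => by
    rw [Bool.eq_iff_iff, hJle, hJle]
  intro i j
  simp only [hcol, hJeq, hJle]
  exact ⟨⟨fun ⟨hji, hij⟩ => le_antisymm hij hji, fun h => ⟨h.ge, h.le⟩⟩,
    apply_eq_apply_iff_forall_le_iff Mᵀ i j⟩
end

section
/- Let M be an m×n Boolean matrix and J = complement of (M̄ᵀ ∘ M). Then for all indices i, j ∈ {1,…,n}: (J[i,j] = 1 and J[j,i] = 0) if and only if column i of M strictly dominates column j of M (i.e., M[:,i] ≥ M[:,j] entrywise and M[:,i] ≠ M[:,j]); moreover, in that case J[:,j] strictly dominates J[:,i] and J[i,:] strictly dominates J[j,:]. -/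
/-!
Entry `(i, j)` of `J` is `1` exactly when no row has a `0` in column `i` and a `1` in column `j`,
i.e. when column `j` of `M` lies below column `i`. So `J` is the Boolean matrix of the pullback of
the entrywise order along `c : i ↦ M[:,i]`, and the theorem becomes a statement about a preorder: the
strict part of `J` is strict dominance of columns, and if `c j < c i` then the principal upper set
of `c i` is strictly contained in that of `c j` (columns of `J`), while the principal lower set of
`c j` is strictly contained in that of `c i` (rows of `J`), with `j` witnessing both strictnesses.
-/

section PullbackOrder

variable {ι α : Type*} [Preorder α] {c : ι → α} {J : ι → ι → Bool}

theorem eq_true_and_eq_false_iff_lt (hJ : ∀ i j, J i j = true ↔ c j ≤ c i) (i j : ι) :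
    (J i j = true ∧ J j i = false) ↔ c j < c i := by
  rw [lt_iff_le_not_ge, hJ, ← Bool.not_eq_true, hJ]

theorem col_lt_col_of_lt (hJ : ∀ i j, J i j = true ↔ c j ≤ c i) {i j : ι} (h : c j < c i) :
    (fun t => J t i) < fun t => J t j := by
  refine Pi.lt_def.mpr ⟨fun t => Bool.le_iff_imp.mpr fun hti => ?_, j, ?_⟩
  · exact (hJ t j).mpr (h.le.trans ((hJ t i).mp hti))
  · have hji : J j i = false := ((eq_true_and_eq_false_iff_lt hJ i j).mpr h).2
    have hjj : J j j = true := (hJ j j).mpr le_rfl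
    simp [hji, hjj]

theorem row_lt_row_of_lt (hJ : ∀ i j, J i j = true ↔ c j ≤ c i) {i j : ι} (h : c j < c i) :
    (fun t => J j t) < fun t => J i t := by
  refine Pi.lt_def.mpr ⟨fun t => Bool.le_iff_imp.mpr fun hjt => ?_, i, ?_⟩
  · exact (hJ i t).mpr (((hJ j t).mp hjt).trans h.le)
  · have hji : J j i = false := ((eq_true_and_eq_false_iff_lt hJ i j).mpr h).2
    have hii : J i i = true := (hJ i i).mpr le_rfl
    simp [hji, hii]

end PullbackOrder

theorem Pi.lt_iff_forall_le_and_ne {ι β : Type*} [PartialOrder β] {f g : ι → β} :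
    f < g ↔ (∀ t, f t ≤ g t) ∧ g ≠ f := by
  rw [lt_iff_le_and_ne, Pi.le_def, ne_comm]

/-- With J = complement of (M̄ᵀ ∘ M), for all i, j:
(J[i,j] = 1 and J[j,i] = 0) iff column i of M strictly dominates column j of M;
moreover in that case J[:,j] strictly dominates J[:,i] and J[i,:] strictly
dominates J[j,:]. -/
theorem stmt_10 (m n : ℕ) (M : Matrix (Fin m) (Fin n) Bool)
    (J : Matrix (Fin n) (Fin n) Bool)
    (hJ : ∀ i j, J i j = !(decide (∃ t : Fin m, (!(M t i)) = true ∧ M t j = true))) :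
    ∀ i j : Fin n,
      ((J i j = true ∧ J j i = false) ↔
        ((∀ t, M t j ≤ M t i) ∧ (fun t => M t i) ≠ (fun t => M t j))) ∧
      ((J i j = true ∧ J j i = false) →
        (((∀ t, J t i ≤ J t j) ∧ (fun t => J t j) ≠ (fun t => J t i)) ∧
         ((∀ t, J j t ≤ J i t) ∧ (fun t => J i t) ≠ (fun t => J j t)))) := by
  have hJle : ∀ i j, J i j = true ↔ (fun t => M t j) ≤ fun t => M t i := by
    intro i j
    simp only [hJ, Pi.le_def, Bool.le_iff_imp, Bool.not_eq_true', decide_eq_false_iff_not, not_exists,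
      not_and]
    exact forall_congr' fun t => by cases M t i <;> simp
  intro i j
  have hstrict := eq_true_and_eq_false_iff_lt hJle i j
  refine ⟨hstrict.trans Pi.lt_iff_forall_le_and_ne, fun h => ?_⟩
  exact ⟨Pi.lt_iff_forall_le_and_ne.mp (col_lt_col_of_lt hJle (hstrict.mp h)),
    Pi.lt_iff_forall_le_and_ne.mp (row_lt_row_of_lt hJle (hstrict.mp h))⟩
end

section
/- Let M be an m×n Boolean matrix with no all-zero row and no all-zero column, and let J = complement of (M̄ᵀ ∘ M). If J' is obtained from J by changing any single 0 entry of J to a 1 (i.e., J'[i,j] = 1 for some pair (i,j) with J[i,j] = 0, and J' agrees with J elsewhere), then M ≠ M ∘ J'ᵀ. -/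
theorem Matrix.not_forall_eq_boolMul_transpose_of_row
    {ι κ : Type*} [Fintype κ] (M : Matrix ι κ Bool) (K : Matrix κ κ Bool) {t : ι} {i j : κ}
    (hti : M t i = false) (htj : M t j = true) (hij : K i j = true) :
    ¬ ∀ s c, M s c = decide (∃ r, M s r = true ∧ K c r = true) := by
  intro h
  have hti' := h t i
  rw [hti, eq_comm, decide_eq_false_iff_not] at hti'
  exact hti' ⟨j, htj, hij⟩

theorem stmt_11_general (m n : ℕ) (M : Matrix (Fin m) (Fin n) Bool)
    (J : Matrix (Fin n) (Fin n) Bool)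
    (hJ : ∀ i j, J i j = !(decide (∃ t : Fin m, (!(M t i)) = true ∧ M t j = true)))
    (i j : Fin n) (hij : J i j = false)
    (J' : Matrix (Fin n) (Fin n) Bool)
    (hJ'1 : J' i j = true) :
    ¬ (∀ s t, M s t = decide (∃ r : Fin n, M s r = true ∧ J' t r = true)) := by
  obtain ⟨t, hti, htj⟩ : ∃ t, M t i = false ∧ M t j = true := by
    simpa [hij] using hJ i j
  -- `convert` only reconciles the `Fin`-specific and `Fintype` `Decidable` instances.
  convert M.not_forall_eq_boolMul_transpose_of_row J' hti htj hJ'1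

/-- Let M be an m×n Boolean matrix with no all-zero row and no all-zero
column, and J = complement of (M̄ᵀ ∘ M). If J' is obtained from J by changing a single
0 entry of J to a 1, then M ≠ M ∘ J'ᵀ.
Here (M∘J'ᵀ)[s,t] = ⋁_r (M[s,r] ∧ J'[t,r]). -/
theorem stmt_11 (m n : ℕ) (M : Matrix (Fin m) (Fin n) Bool)
    (hrow : ∀ i, ∃ j, M i j = true) (hcol : ∀ j, ∃ i, M i j = true)
    (J : Matrix (Fin n) (Fin n) Bool)
    (hJ : ∀ i j, J i j = !(decide (∃ t : Fin m, (!(M t i)) = true ∧ M t j = true)))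
    (i j : Fin n) (hij : J i j = false)
    (J' : Matrix (Fin n) (Fin n) Bool)
    (hJ'1 : J' i j = true)
    (hJ'2 : ∀ i' j', (i', j') ≠ (i, j) → J' i' j' = J i' j') :
    ¬ (∀ s t, M s t = decide (∃ r : Fin n, M s r = true ∧ J' t r = true)) :=
  stmt_11_general m n M J hJ i j hij J' hJ'1
end
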